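/- Let F be a definite Horn formula (a set of clauses P → x where P is a finite set of propositional variables and x a variable) and let P' → x be a non-tautological clause (x ∉ P'). Then F entails P' → x if and only if there exists a clause P → x in F such that F^x ∪ P' entails P, where F^x denotes F with all clauses containing x (in head or body) removed. -/
import Mathlib


/-- A definite Horn clause: a finite body of variables implying a head variable. -/
structure Clause (V : Type) where
  body : Finset V
  head : V
deriving DecidableEq

variable {V : Type} [DecidableEq V]

/-- A model satisfies a clause when the head is true if the whole body is true. -/
def satClause (M : V → Prop) (c : Clause V) : Prop :=
  (∀ v ∈ c.body, M v) → M c.head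

/-- A model satisfies a set of clauses when it satisfies each of them. -/
def satSet (M : V → Prop) (S : Set (Clause V)) : Prop :=
  ∀ c ∈ S, satClause M c

/-- `EntV S A x`: the formula `S` together with the variables `A` entails variable `x`. -/
def EntV (S : Set (Clause V)) (A : Set V) (x : V) : Prop :=
  ∀ M : V → Prop, satSet M S → (∀ v ∈ A, M v) → M x

/-- `EntVS S A B`: `S ⊨ A → B`, i.e. `S` with `A` entails every variable of `B`. -/
def EntVS (S : Set (Clause V)) (A B : Set V) : Prop :=
  ∀ x ∈ B, EntV S A x

/-- `EntF S T`: `S` entails every clause of `T`. -/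
def EntF (S T : Set (Clause V)) : Prop :=
  ∀ c ∈ T, EntV S (↑c.body) c.head

/-- Logical equivalence of two sets of clauses: same models. -/
def EquivS (S T : Set (Clause V)) : Prop :=
  ∀ M : V → Prop, satSet M S ↔ satSet M T

/-- `BCN`: all variable consequences of `B` under the formula `S`. -/
def BCN (S : Set (Clause V)) (B : Set V) : Set V :=
  {x | EntV S B x}

/-- `RCN`: real consequences of `B` under `S`. -/
def RCN (S : Set (Clause V)) (B : Set V) : Set V :=
  {x | EntV S (BCN S B \ {x}) x}

/-- `F^x`: `F` without the clauses mentioning `x` in head or body. -/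
def Fx (F : Finset (Clause V)) (x : V) : Finset (Clause V) :=
  F.filter (fun c => x ∉ c.body ∧ c.head ≠ x)

/-- A formula is single-head when no two distinct clauses share the head. -/
def SingleHead (F : Finset (Clause V)) : Prop :=
  ∀ c ∈ F, ∀ d ∈ F, c.head = d.head → c = d

/-- `UCL(B,F)`: non-tautological clauses of `F` whose body is entailed by `B` according to `F`. -/
def UCL (B : Set V) (F : Finset (Clause V)) : Set (Clause V) :=
  {c | c ∈ F ∧ c.head ∉ c.body ∧ EntVS (↑F) B (↑c.body)}

/-- `UCL(B,G,F)`: clauses of `G` whose body is entailed by `B` according to `F`. -/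
def UCL3 (B : Set V) (G F : Finset (Clause V)) : Set (Clause V) :=
  {c | c ∈ G ∧ EntVS (↑F) B (↑c.body)}

/-- `SCL(B,F)`: clauses of strictly entailed bodies. -/
def SCL (B : Set V) (F : Finset (Clause V)) : Set (Clause V) :=
  {c | c.head ∉ c.body ∧ EntV (↑F) (↑c.body) c.head ∧
       EntVS (↑F) B (↑c.body) ∧ ¬ EntVS (↑F) (↑c.body) B}

/-- `BCL(B,F)`: clauses of equivalent bodies. -/
def BCL (B : Set V) (F : Finset (Clause V)) : Set (Clause V) :=
  {c | c.head ∉ c.body ∧ EntV (↑F) (↑c.body) c.head ∧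
       EntVS (↑F) B (↑c.body) ∧ EntVS (↑F) (↑c.body) B}

/-- `HCLOSE(H,S)`: body-minimal non-tautological entailed clauses with head in `H`. -/
def HCLOSE (H : Set V) (S : Set (Clause V)) : Set (Clause V) :=
  {c | EntV S (↑c.body) c.head ∧ c.head ∈ H ∧ c.head ∉ c.body ∧
       ∀ B'' : Finset V, B'' ⊂ c.body → ¬ EntV S (↑B'') c.head}

/-- One resolution step: resolve a clause of `S` into the body of `c`. -/
def Step (S : Set (Clause V)) (c d : Clause V) : Prop :=
  ∃ e ∈ S, e.head ∈ c.body ∧ d = ⟨(c.body \ {e.head}) ∪ e.body, c.head⟩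

theorem stmt0 (F : Finset (Clause V)) (P' : Finset V) (x : V) (hx : x ∉ P') :
    EntV (↑F) (↑P') x ↔
      ∃ c ∈ F, c.head = x ∧ EntVS (↑(Fx F x)) (↑P') (↑c.body : Set V) := by
  constructor
  · intro hent
    by_contra hno
    push_neg at hno
    set M : V → Prop := fun v => EntV (↑(Fx F x)) (↑P') v with hM
    have hMx : ¬ M x := by
      intro h
      have := h (fun v => v ≠ x)
        (by
          intro c hc _
          simp only [Fx, Finset.coe_filter, Set.mem_setOf_eq] at hc
          exact hc.2.2)
        (by
          intro v hv h'
          exact hx (h' ▸ hv))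
      exact this rfl
    have hMF : satSet M (↑F) := by
      intro c hc hbody
      by_cases hxb : x ∈ c.body
      · exact absurd (hbody x hxb) hMx
      by_cases hhead : c.head = x
      · exact absurd (fun v hv => hbody v hv) (hno c hc hhead)
      · -- c ∈ Fx F x
        intro N hN hP'
        have hcFx : c ∈ Fx F x := by
          simp only [Fx, Finset.mem_filter]
          exact ⟨hc, hxb, hhead⟩
        exact hN c hcFx (fun v hv => hbody v hv N hN hP')
    exact hMx (hent M hMF (fun v hv => fun N hN hP' => hP' v hv))
  · rintro ⟨c, hc, hhead, hbody⟩
    intro M hMF hP'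
    have hMFx : satSet M (↑(Fx F x)) := by
      intro d hd
      have : d ∈ F := Finset.mem_of_mem_filter d hd
      exact hMF d this
    have := hMF c hc (fun v hv => hbody v hv M hMFx hP')
    exact hhead ▸ this
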